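/- Let F : R^D → R^O be an affine map F(u) = F u + f, with prior N(μ_pr, Γ_pr) and noise N(μ_E, Γ_E) Gaussian with SPD covariances, y ∈ R^O, and θ ∈ R \ {0}. Let (μ̂, Ĉ) with Ĉ an invertible lower-triangular matrix be a stationary point of L_θ(μ, C) = θ² tr(Γ⁻¹Γ_pr) + ‖μ−μ_pr‖²_{Γ_pr⁻¹} + θ² tr(Γ_pr⁻¹Γ) + ‖y − μ_E − F(μ)‖²_{Γ_E⁻¹} + tr(Γ_E⁻¹ (F̃(θC + μ 1_Dᵀ) − F(μ)1_Dᵀ)(F̃(θC + μ 1_Dᵀ) − F(μ)1_Dᵀ)ᵀ), where Γ = C Cᵀ and F̃ applies F columnwise. Set Γ̂ = Ĉ Ĉᵀ. Then μ̂ = u_MAP and Γ̂ Γ_pr⁻¹ Γ̂ = Γ_Lap, with u_MAP and Γ_Lap given by the affine formulas u_MAP = Γ_Lap(Fᵀ Γ_E⁻¹ (y − f − μ_E) + Γ_pr⁻¹ μ_pr) and Γ_Lap = (Fᵀ Γ_E⁻¹ F + Γ_pr⁻¹)⁻¹. -/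

import Mathlib

/-!
For affine `F` the columnwise term of `L_θ` equals `θ² tr(Fᵀ Γ_E⁻¹ F Γ)` with `Γ = C Cᵀ`, so
`L_θ(μ, C)` splits into a quadratic in `μ`, whose gradient `2 (K μ - b)` with
`K = Fᵀ Γ_E⁻¹ F + Γ_pr⁻¹` vanishes only at `u_MAP`, plus `θ² (tr(Γ⁻¹ Γ_pr) + tr(K Γ))`.
The derivative of the latter along `C + t V` is `θ² tr(G (C Vᵀ + V Cᵀ))` with the symmetric
`G = K - Γ⁻¹ Γ_pr Γ⁻¹`; in the direction `V = G C` it equals `2 θ² tr((G C)(G C)ᵀ)`, so `G C = 0`,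
hence `G = 0` as `C` is invertible, i.e. `Γ Γ_pr⁻¹ Γ = K⁻¹ = Γ_Lap`.
-/

open Matrix

theorem hasDerivAt_dotProduct_mulVec_line {m : Type*} [Fintype m] {M : Matrix m m ℝ}
    (hM : M.IsSymm) (a v : m → ℝ) :
    HasDerivAt (fun t : ℝ => (a + t • v) ⬝ᵥ M *ᵥ (a + t • v)) (2 * (v ⬝ᵥ M *ᵥ a)) 0 := by
  have hsymm : a ⬝ᵥ M *ᵥ v = v ⬝ᵥ M *ᵥ a := by
    rw [dotProduct_mulVec, ← mulVec_transpose, hM.eq, dotProduct_comm]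
  have hexpand : (fun t : ℝ => (a + t • v) ⬝ᵥ M *ᵥ (a + t • v)) = fun t =>
      a ⬝ᵥ M *ᵥ a + t * (2 * (v ⬝ᵥ M *ᵥ a)) + t ^ 2 * (v ⬝ᵥ M *ᵥ v) := by
    funext t
    simp only [mulVec_add, mulVec_smul, add_dotProduct, dotProduct_add, smul_dotProduct,
      dotProduct_smul, smul_eq_mul, hsymm]
    ring
  rw [hexpand]
  refine ((((hasDerivAt_id' (0 : ℝ)).mul_const (2 * (v ⬝ᵥ M *ᵥ a))).const_add
    (a ⬝ᵥ M *ᵥ a)).fun_add ((hasDerivAt_pow 2 (0 : ℝ)).mul_const (v ⬝ᵥ M *ᵥ v))).congr_deriv ?_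
  simp

section MatrixCalculus

-- Only the induced (product) topology matters; this norm makes matrices a complete normed algebra.
attribute [local instance] Matrix.linftyOpNormedAddCommGroup Matrix.linftyOpNormedSpace
  Matrix.linftyOpNormedRing Matrix.linftyOpNormedAlgebra

variable {n : Type*} [Fintype n] [DecidableEq n]

theorem HasDerivAt.matrix_trace_mul_left {Γ : ℝ → Matrix n n ℝ} {S : Matrix n n ℝ} {t : ℝ}
    (hΓ : HasDerivAt Γ S t) (K : Matrix n n ℝ) :
    HasDerivAt (fun s => (K * Γ s).trace) (K * S).trace t := by
  let trK : Matrix n n ℝ →L[ℝ] ℝ :=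
    ((traceLinearMap n ℝ ℝ).comp (LinearMap.mulLeft ℝ K)).toContinuousLinearMap
  exact trK.hasFDerivAt.comp_hasDerivAt t hΓ

theorem HasDerivAt.matrix_inv {Γ : ℝ → Matrix n n ℝ} {S : Matrix n n ℝ} {t : ℝ}
    (hΓ : HasDerivAt Γ S t) (hΓt : IsUnit (Γ t).det) :
    HasDerivAt (fun s => (Γ s)⁻¹) (-((Γ t)⁻¹ * S * (Γ t)⁻¹)) t := by
  obtain ⟨u, hu⟩ := (isUnit_iff_isUnit_det _).mpr hΓt
  have h := (hu ▸ hasFDerivAt_ringInverse (𝕜 := ℝ) u).comp_hasDerivAt t hΓ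
  simp only [nonsing_inv_eq_ringInverse]
  refine h.congr_deriv ?_
  simp [← hu, Matrix.mul_assoc]

theorem hasDerivAt_mul_transpose_line (C V : Matrix n n ℝ) :
    HasDerivAt (fun t : ℝ => (C + t • V) * (C + t • V)ᵀ) (C * Vᵀ + V * Cᵀ) 0 := by
  have hline : ∀ W U : Matrix n n ℝ, HasDerivAt (fun t : ℝ => W + t • U) U 0 := fun W U =>
    (((hasDerivAt_id (0 : ℝ)).smul_const U).const_add W).congr_deriv (one_smul ℝ U)
  have hlineT : HasDerivAt (fun t : ℝ => (C + t • V)ᵀ) Vᵀ 0 := by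
    simpa only [transpose_add, transpose_smul] using hline Cᵀ Vᵀ
  exact ((hline C V).fun_mul hlineT).congr_deriv (by simp [add_comm])

theorem hasDerivAt_trace_inv_mul_add_trace_mul_line {C : Matrix n n ℝ} (hC : IsUnit C.det)
    (V P K : Matrix n n ℝ) :
    HasDerivAt (fun t : ℝ => (((C + t • V) * (C + t • V)ᵀ)⁻¹ * P).trace +
        (K * ((C + t • V) * (C + t • V)ᵀ)).trace)
      (((K - (C * Cᵀ)⁻¹ * P * (C * Cᵀ)⁻¹) * (C * Vᵀ + V * Cᵀ)).trace) 0 := by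
  have hΓ := hasDerivAt_mul_transpose_line C V
  have hΓ0 : IsUnit ((C + (0 : ℝ) • V) * (C + (0 : ℝ) • V)ᵀ).det := by
    simpa [det_mul, det_transpose] using hC.mul hC
  have h := ((hΓ.matrix_inv hΓ0).matrix_trace_mul_left P).add (hΓ.matrix_trace_mul_left K)
  have hcyc : ∀ A B : Matrix n n ℝ, (A * P * A * B).trace = (P * (A * (B * A))).trace := by
    intro A B
    rw [Matrix.mul_assoc, Matrix.mul_assoc, trace_mul_comm]
    simp only [Matrix.mul_assoc]
  simp only [trace_mul_comm _ P]
  refine h.congr_deriv ?_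
  simp only [zero_smul, add_zero, Matrix.mul_neg, trace_neg, Matrix.sub_mul, trace_sub]
  rw [hcyc]
  simp only [Matrix.mul_assoc]
  ring

end MatrixCalculus

theorem Matrix.IsSymm.trace_mul_mul_transpose_add {n R : Type*} [Fintype n] [CommRing R]
    {G : Matrix n n R} (hG : G.IsSymm) (C : Matrix n n R) :
    (G * (C * (G * C)ᵀ + G * C * Cᵀ)).trace = 2 * (G * C * (G * C)ᵀ).trace := by
  have hcyc : (G * (G * C * Cᵀ)).trace = (G * C * (G * C)ᵀ).trace := by
    rw [trace_mul_comm G, transpose_mul, hG.eq]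
    simp only [Matrix.mul_assoc]
  rw [Matrix.mul_add, trace_add, hcyc, transpose_mul, hG.eq]
  simp only [Matrix.mul_assoc]
  ring

section Objective

variable {n m : Type*} [Fintype n] [Fintype m] [DecidableEq n] [DecidableEq m]

/-- `L_θ(μ, C)` for the affine forward map `u ↦ Fm u + f`, evaluated at `p = (μ, C)`. -/
noncomputable def thetaLoss (Fm : Matrix m n ℝ) (f y μE : m → ℝ) (μpr : n → ℝ)
    (Γpr : Matrix n n ℝ) (ΓE : Matrix m m ℝ) (θ : ℝ) (p : (n → ℝ) × (n → n → ℝ)) : ℝ :=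
  θ ^ 2 * ((Matrix.of p.2 * (Matrix.of p.2)ᵀ)⁻¹ * Γpr).trace +
    (p.1 - μpr) ⬝ᵥ Γpr⁻¹ *ᵥ (p.1 - μpr) +
    θ ^ 2 * (Γpr⁻¹ * (Matrix.of p.2 * (Matrix.of p.2)ᵀ)).trace +
    (y - μE - (Fm *ᵥ p.1 + f)) ⬝ᵥ ΓE⁻¹ *ᵥ (y - μE - (Fm *ᵥ p.1 + f)) +
    (ΓE⁻¹ *
      ((Matrix.of fun o k => (Fm *ᵥ (fun i => θ * p.2 i k + p.1 i) + f) o) -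
        vecMulVec (Fm *ᵥ p.1 + f) (fun _ => 1)) *
      ((Matrix.of fun o k => (Fm *ᵥ (fun i => θ * p.2 i k + p.1 i) + f) o) -
        vecMulVec (Fm *ᵥ p.1 + f) (fun _ => 1))ᵀ).trace

omit [Fintype m] [DecidableEq n] [DecidableEq m] in
theorem of_affine_columns_sub_vecMulVec {R : Type*} [CommRing R] (Fm : Matrix m n R) (f : m → R)
    (θ : R) (μ : n → R) (C : n → n → R) :
    (Matrix.of fun o k => (Fm *ᵥ (fun i => θ * C i k + μ i) + f) o) -
      vecMulVec (Fm *ᵥ μ + f) (fun _ => 1) = θ • (Fm * Matrix.of C) := by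
  ext o k
  simp only [Matrix.sub_apply, of_apply, vecMulVec_apply, Pi.add_apply, Matrix.smul_apply,
    mul_apply, mulVec, dotProduct, smul_eq_mul, mul_one, mul_add, Finset.sum_add_distrib,
    Finset.mul_sum]
  rw [add_sub_add_right_eq_sub, add_sub_cancel_right]
  exact Finset.sum_congr rfl fun i _ => by ring

omit [DecidableEq n] [DecidableEq m] in
theorem trace_mul_mul_transpose_of_mul {R : Type*} [CommRing R] (E : Matrix m m R)
    (Fm : Matrix m n R) (C : Matrix n n R) :
    (E * (Fm * C) * (Fm * C)ᵀ).trace = (Fmᵀ * E * Fm * (C * Cᵀ)).trace := by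
  rw [transpose_mul, show E * (Fm * C) * (Cᵀ * Fmᵀ) = E * Fm * (C * Cᵀ) * Fmᵀ by
    simp only [Matrix.mul_assoc], trace_mul_comm]
  simp only [Matrix.mul_assoc]

theorem thetaLoss_eq (Fm : Matrix m n ℝ) (f y μE : m → ℝ) (μpr : n → ℝ)
    (Γpr : Matrix n n ℝ) (ΓE : Matrix m m ℝ) (θ : ℝ) (p : (n → ℝ) × (n → n → ℝ)) :
    thetaLoss Fm f y μE μpr Γpr ΓE θ p =
      (p.1 - μpr) ⬝ᵥ Γpr⁻¹ *ᵥ (p.1 - μpr) +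
      (y - μE - (Fm *ᵥ p.1 + f)) ⬝ᵥ ΓE⁻¹ *ᵥ (y - μE - (Fm *ᵥ p.1 + f)) +
      θ ^ 2 * (((Matrix.of p.2 * (Matrix.of p.2)ᵀ)⁻¹ * Γpr).trace +
        ((Fmᵀ * ΓE⁻¹ * Fm + Γpr⁻¹) * (Matrix.of p.2 * (Matrix.of p.2)ᵀ)).trace) := by
  rw [thetaLoss, of_affine_columns_sub_vecMulVec]
  simp only [transpose_smul, Matrix.mul_smul, Matrix.smul_mul, smul_smul, trace_smul, smul_eq_mul,
    trace_mul_mul_transpose_of_mul, add_mul, trace_add]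
  ring

end Objective

section Stationarity

variable {n m : Type*} [Fintype n] [Fintype m] [DecidableEq n] [DecidableEq m]
  {Fm : Matrix m n ℝ} {f y μE : m → ℝ} {μpr : n → ℝ} {Γpr : Matrix n n ℝ} {ΓE : Matrix m m ℝ}
  {θ : ℝ} {μ : n → ℝ} {C : n → n → ℝ}

theorem hasDerivAt_thetaLoss_line_fst (hΓpr : Γpr⁻¹.IsSymm) (hΓE : ΓE⁻¹.IsSymm) (v : n → ℝ) :
    HasDerivAt (fun t : ℝ => thetaLoss Fm f y μE μpr Γpr ΓE θ ((μ, C) + t • (v, 0)))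
      (2 * (v ⬝ᵥ (Γpr⁻¹ *ᵥ (μ - μpr) - Fmᵀ *ᵥ (ΓE⁻¹ *ᵥ (y - μE - (Fm *ᵥ μ + f)))))) 0 := by
  set r := y - μE - (Fm *ᵥ μ + f)
  have hres : ∀ t : ℝ, y - μE - (Fm *ᵥ (μ + t • v) + f) = r + t • -(Fm *ᵥ v) := fun t => by
    rw [mulVec_add, mulVec_smul, smul_neg]
    simp only [r]
    abel
  have hfun : (fun t : ℝ => thetaLoss Fm f y μE μpr Γpr ΓE θ ((μ, C) + t • (v, 0))) =
      fun t => ((μ - μpr) + t • v) ⬝ᵥ Γpr⁻¹ *ᵥ ((μ - μpr) + t • v) +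
        (r + t • -(Fm *ᵥ v)) ⬝ᵥ ΓE⁻¹ *ᵥ (r + t • -(Fm *ᵥ v)) +
        θ ^ 2 * (((Matrix.of C * (Matrix.of C)ᵀ)⁻¹ * Γpr).trace +
          ((Fmᵀ * ΓE⁻¹ * Fm + Γpr⁻¹) * (Matrix.of C * (Matrix.of C)ᵀ)).trace) := by
    funext t
    rw [thetaLoss_eq, Prod.smul_mk, smul_zero, Prod.mk_add_mk, add_zero, add_sub_right_comm,
      hres]
  rw [hfun]
  refine (((hasDerivAt_dotProduct_mulVec_line hΓpr _ _).add
    (hasDerivAt_dotProduct_mulVec_line hΓE _ _)).add_const _).congr_deriv ?_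
  have hadj : (Fm *ᵥ v) ⬝ᵥ ΓE⁻¹ *ᵥ r = v ⬝ᵥ Fmᵀ *ᵥ (ΓE⁻¹ *ᵥ r) := by
    rw [dotProduct_comm, dotProduct_transpose_mulVec]
  rw [neg_dotProduct, hadj, dotProduct_sub]
  ring

theorem hasDerivAt_thetaLoss_line_snd (hC : IsUnit (Matrix.of C).det) (V : Matrix n n ℝ) :
    HasDerivAt
      (fun t : ℝ => thetaLoss Fm f y μE μpr Γpr ΓE θ ((μ, C) + t • (0, Matrix.of.symm V)))
      (θ ^ 2 * ((Fmᵀ * ΓE⁻¹ * Fm + Γpr⁻¹ - (Matrix.of C * (Matrix.of C)ᵀ)⁻¹ * Γpr *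
        (Matrix.of C * (Matrix.of C)ᵀ)⁻¹) * (Matrix.of C * Vᵀ + V * (Matrix.of C)ᵀ)).trace) 0 := by
  have hfun : (fun t : ℝ =>
      thetaLoss Fm f y μE μpr Γpr ΓE θ ((μ, C) + t • (0, Matrix.of.symm V))) =
      fun t => ((μ - μpr) ⬝ᵥ Γpr⁻¹ *ᵥ (μ - μpr) +
        (y - μE - (Fm *ᵥ μ + f)) ⬝ᵥ ΓE⁻¹ *ᵥ (y - μE - (Fm *ᵥ μ + f))) +
        θ ^ 2 * ((((Matrix.of C + t • V) * (Matrix.of C + t • V)ᵀ)⁻¹ * Γpr).trace +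
          ((Fmᵀ * ΓE⁻¹ * Fm + Γpr⁻¹) *
            ((Matrix.of C + t • V) * (Matrix.of C + t • V)ᵀ)).trace) := by
    funext t
    rw [thetaLoss_eq, Prod.smul_mk, smul_zero, Prod.mk_add_mk, add_zero]
    rfl
  rw [hfun]
  exact ((hasDerivAt_trace_inv_mul_add_trace_mul_line hC V Γpr _).const_mul (θ ^ 2)).const_add _

theorem normal_equation_of_thetaLoss_stationary (hΓpr : Γpr⁻¹.IsSymm) (hΓE : ΓE⁻¹.IsSymm)
    (h : HasFDerivAt (thetaLoss Fm f y μE μpr Γpr ΓE θ)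
      (0 : (n → ℝ) × (n → n → ℝ) →L[ℝ] ℝ) (μ, C)) :
    (Fmᵀ * ΓE⁻¹ * Fm + Γpr⁻¹) *ᵥ μ = Fmᵀ *ᵥ (ΓE⁻¹ *ᵥ (y - f - μE)) + Γpr⁻¹ *ᵥ μpr := by
  set g := Γpr⁻¹ *ᵥ (μ - μpr) - Fmᵀ *ᵥ (ΓE⁻¹ *ᵥ (y - μE - (Fm *ᵥ μ + f)))
  have h0 : 2 * (g ⬝ᵥ g) = 0 :=
    (hasDerivAt_thetaLoss_line_fst hΓpr hΓE g).unique (h.hasLineDerivAt _)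
  have hg : g = 0 := dotProduct_self_eq_zero.mp (by linarith)
  rw [sub_eq_zero] at hg
  simp only [mulVec_sub, mulVec_add, add_mulVec, ← mulVec_mulVec] at hg ⊢
  linear_combination (norm := module) hg

theorem precision_eq_of_thetaLoss_stationary (hθ : θ ≠ 0) (hΓpr : Γpr.IsSymm)
    (hΓE : ΓE⁻¹.IsSymm) (hC : IsUnit (Matrix.of C).det)
    (h : HasFDerivAt (thetaLoss Fm f y μE μpr Γpr ΓE θ)
      (0 : (n → ℝ) × (n → n → ℝ) →L[ℝ] ℝ) (μ, C)) :
    Fmᵀ * ΓE⁻¹ * Fm + Γpr⁻¹ =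
      (Matrix.of C * (Matrix.of C)ᵀ)⁻¹ * Γpr * (Matrix.of C * (Matrix.of C)ᵀ)⁻¹ := by
  set Γ := Matrix.of C * (Matrix.of C)ᵀ
  set G := Fmᵀ * ΓE⁻¹ * Fm + Γpr⁻¹ - Γ⁻¹ * Γpr * Γ⁻¹
  have hG : G.IsSymm := by
    have hΓ : Γ⁻¹.IsSymm := (isSymm_mul_transpose_self _).inv
    show Gᵀ = G
    simp only [G, transpose_sub, transpose_add, transpose_mul, transpose_transpose, hΓE.eq,
      hΓpr.eq, hΓpr.inv.eq, hΓ.eq, Matrix.mul_assoc]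
  have h0 : θ ^ 2 *
      (G * (Matrix.of C * (G * Matrix.of C)ᵀ + G * Matrix.of C * (Matrix.of C)ᵀ)).trace = 0 :=
    (hasDerivAt_thetaLoss_line_snd hC _).unique (h.hasLineDerivAt _)
  rw [hG.trace_mul_mul_transpose_add, mul_eq_zero, mul_eq_zero] at h0
  have hGC : G * Matrix.of C = 0 := by
    refine trace_mul_conjTranspose_self_eq_zero_iff.mp ?_
    rw [conjTranspose_eq_transpose_of_trivial]
    exact (h0.resolve_left (pow_ne_zero 2 hθ)).resolve_left two_ne_zero
  have hG0 : G = 0 := by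
    rw [← mul_nonsing_inv_cancel_right (Matrix.of C) G hC, hGC, Matrix.zero_mul]
  exact sub_eq_zero.mp hG0

end Stationarity

theorem stmt6_general {D O : ℕ} (Fm : Matrix (Fin O) (Fin D) ℝ) (f y μE : Fin O → ℝ)
    (μpr : Fin D → ℝ) (Γpr : Matrix (Fin D) (Fin D) ℝ) (hΓpr : Γpr.PosDef)
    (ΓE : Matrix (Fin O) (Fin O) ℝ) (hΓE : ΓE.PosDef)
    (θ : ℝ) (hθ : θ ≠ 0)
    (L : (Fin D → ℝ) × (Fin D → Fin D → ℝ) → ℝ)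
    (hL : ∀ p : (Fin D → ℝ) × (Fin D → Fin D → ℝ),
      L p =
        θ ^ 2 * ((Matrix.of p.2 * (Matrix.of p.2)ᵀ)⁻¹ * Γpr).trace +
        (p.1 - μpr) ⬝ᵥ Γpr⁻¹ *ᵥ (p.1 - μpr) +
        θ ^ 2 * (Γpr⁻¹ * (Matrix.of p.2 * (Matrix.of p.2)ᵀ)).trace +
        (y - μE - (Fm *ᵥ p.1 + f)) ⬝ᵥ ΓE⁻¹ *ᵥ (y - μE - (Fm *ᵥ p.1 + f)) +
        (ΓE⁻¹ *
          ((Matrix.of fun o k => (Fm *ᵥ (fun i => θ * p.2 i k + p.1 i) + f) o) -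
            vecMulVec (Fm *ᵥ p.1 + f) (fun _ => 1)) *
          ((Matrix.of fun o k => (Fm *ᵥ (fun i => θ * p.2 i k + p.1 i) + f) o) -
            vecMulVec (Fm *ᵥ p.1 + f) (fun _ => 1))ᵀ).trace)
    (μhat : Fin D → ℝ) (Chat : Fin D → Fin D → ℝ)
    (hChatInv : IsUnit (Matrix.of Chat).det)
    (hstat : HasFDerivAt L (0 : ((Fin D → ℝ) × (Fin D → Fin D → ℝ)) →L[ℝ] ℝ) (μhat, Chat))
    (Γhat : Matrix (Fin D) (Fin D) ℝ) (hΓhat : Γhat = Matrix.of Chat * (Matrix.of Chat)ᵀ)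
    (ΓLap : Matrix (Fin D) (Fin D) ℝ) (hΓLap : ΓLap = (Fmᵀ * ΓE⁻¹ * Fm + Γpr⁻¹)⁻¹)
    (uMAP : Fin D → ℝ)
    (huMAP : uMAP = ΓLap *ᵥ (Fmᵀ *ᵥ (ΓE⁻¹ *ᵥ (y - f - μE)) + Γpr⁻¹ *ᵥ μpr)) :
    μhat = uMAP ∧ Γhat * Γpr⁻¹ * Γhat = ΓLap := by
  obtain rfl : L = thetaLoss Fm f y μE μpr Γpr ΓE θ := funext hL
  have hprSymm : Γpr.IsSymm := isHermitian_iff_isSymm.mp hΓpr.isHermitian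
  have hESymm : ΓE⁻¹.IsSymm := isHermitian_iff_isSymm.mp hΓE.inv.isHermitian
  have hΓ : IsUnit (Matrix.of Chat * (Matrix.of Chat)ᵀ).det := by
    simpa [det_mul, det_transpose] using hChatInv.mul hChatInv
  have hprec := precision_eq_of_thetaLoss_stationary hθ hprSymm hESymm hChatInv hstat
  have hprecUnit : IsUnit (Fmᵀ * ΓE⁻¹ * Fm + Γpr⁻¹).det := by
    rw [hprec, det_mul, det_mul]
    exact ((isUnit_nonsing_inv_det _ hΓ).mul ((isUnit_iff_isUnit_det _).mp hΓpr.isUnit)).mul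
      (isUnit_nonsing_inv_det _ hΓ)
  constructor
  · rw [huMAP, hΓLap, ← normal_equation_of_thetaLoss_stationary hprSymm.inv hESymm hstat,
      mulVec_mulVec, nonsing_inv_mul _ hprecUnit, one_mulVec]
  · rw [hΓLap, hprec, Matrix.mul_inv_rev _ (_)⁻¹, Matrix.mul_inv_rev _ Γpr,
      nonsing_inv_nonsing_inv _ hΓ, hΓhat, Matrix.mul_assoc]

/-- Theorem `thm:convergenceNew`, affine case: for affine `F(u) = F u + f`,
SPD prior/noise covariances, `θ ≠ 0`, if `(μ̂, Ĉ)` with `Ĉ` invertible lower triangular is a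
stationary point of `L_θ`, then `μ̂ = u_MAP` and `Γ̂ Γ_pr⁻¹ Γ̂ = Γ_Lap` with `Γ̂ = Ĉ Ĉᵀ`. -/
theorem stmt6 {D O : ℕ} (Fm : Matrix (Fin O) (Fin D) ℝ) (f y μE : Fin O → ℝ)
    (μpr : Fin D → ℝ) (Γpr : Matrix (Fin D) (Fin D) ℝ) (hΓpr : Γpr.PosDef)
    (ΓE : Matrix (Fin O) (Fin O) ℝ) (hΓE : ΓE.PosDef)
    (θ : ℝ) (hθ : θ ≠ 0)
    (L : (Fin D → ℝ) × (Fin D → Fin D → ℝ) → ℝ)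
    (hL : ∀ p : (Fin D → ℝ) × (Fin D → Fin D → ℝ),
      L p =
        θ ^ 2 * ((Matrix.of p.2 * (Matrix.of p.2)ᵀ)⁻¹ * Γpr).trace +
        (p.1 - μpr) ⬝ᵥ Γpr⁻¹ *ᵥ (p.1 - μpr) +
        θ ^ 2 * (Γpr⁻¹ * (Matrix.of p.2 * (Matrix.of p.2)ᵀ)).trace +
        (y - μE - (Fm *ᵥ p.1 + f)) ⬝ᵥ ΓE⁻¹ *ᵥ (y - μE - (Fm *ᵥ p.1 + f)) +
        (ΓE⁻¹ *
          ((Matrix.of fun o k => (Fm *ᵥ (fun i => θ * p.2 i k + p.1 i) + f) o) -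
            vecMulVec (Fm *ᵥ p.1 + f) (fun _ => 1)) *
          ((Matrix.of fun o k => (Fm *ᵥ (fun i => θ * p.2 i k + p.1 i) + f) o) -
            vecMulVec (Fm *ᵥ p.1 + f) (fun _ => 1))ᵀ).trace)
    (μhat : Fin D → ℝ) (Chat : Fin D → Fin D → ℝ)
    (hChatLow : ∀ i j : Fin D, (i : ℕ) < (j : ℕ) → Chat i j = 0)
    (hChatInv : IsUnit (Matrix.of Chat).det)
    (hstat : HasFDerivAt L (0 : ((Fin D → ℝ) × (Fin D → Fin D → ℝ)) →L[ℝ] ℝ) (μhat, Chat))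
    (Γhat : Matrix (Fin D) (Fin D) ℝ) (hΓhat : Γhat = Matrix.of Chat * (Matrix.of Chat)ᵀ)
    (ΓLap : Matrix (Fin D) (Fin D) ℝ) (hΓLap : ΓLap = (Fmᵀ * ΓE⁻¹ * Fm + Γpr⁻¹)⁻¹)
    (uMAP : Fin D → ℝ)
    (huMAP : uMAP = ΓLap *ᵥ (Fmᵀ *ᵥ (ΓE⁻¹ *ᵥ (y - f - μE)) + Γpr⁻¹ *ᵥ μpr)) :
    μhat = uMAP ∧ Γhat * Γpr⁻¹ * Γhat = ΓLap :=
  stmt6_general Fm f y μE μpr Γpr hΓpr ΓE hΓE θ hθ L hL μhat Chat hChatInv hstat Γhat hΓhat ΓLap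
    hΓLap uMAP huMAP
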